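/- arXiv:2603.25174 — 2 statements merged into one kernel-verified Lean document; each statement's English description precedes it below -/
import Mathlib

section
/- Let t ≥ 2 and k ≥ 1 be integers and set α_n = (2^{kn} − (−1)^n)/(2^k + 1) for n ≥ 0. Then for every natural number m, the coefficient of z^m in a_t(α_n; z) is eventually constant as n → ∞; consequently there is a formal power series H_k(z) ∈ ℤ[[z]], all of whose coefficients are 0 or 1, such that for every m the coefficient of z^m in a_t(α_n; z) equals the m-th coefficient of H_k for all sufficiently large n. -/
open Polynomial

/-- The (Type 1) Stern polynomials `a_t(n; z) ∈ ℤ[z]` of Dilcher and Eriksen: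
`a_t(0;z) = 0`, `a_t(1;z) = 1`, and for `n ≥ 1`,
`a_t(2n;z) = z·a_t(n;z^t)`, `a_t(2n+1;z) = a_t(n+1;z^t) + a_t(n;z^t)`. -/
noncomputable def sternPoly (t : ℕ) : ℕ → Polynomial ℤ
  | 0 => 0
  | 1 => 1
  | n + 2 =>
    if h : (n + 2) % 2 = 0 then
      X * (sternPoly t ((n + 2) / 2)).comp (X ^ t)
    else
      (sternPoly t ((n + 2) / 2 + 1)).comp (X ^ t) +
        (sternPoly t ((n + 2) / 2)).comp (X ^ t)
decreasing_by all_goals omega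

/-- `α_n = (2^{kn} - (-1)^n) / (2^k + 1)`, a nonnegative integer. -/
def sternAlpha (k n : ℕ) : ℕ :=
  (((2 : ℤ) ^ (k * n) - (-1) ^ n) / (2 ^ k + 1)).toNat

/-!
Since `α_{n+1} = 2^k α_n + (-1)^n`, the pair `(a_t(α_n), a_t(α_n + (-1)^n))` is obtained from
the previous one by `k` applications of `(p, q) ↦ (z·p(z^t), p(z^t) + q(z^t))`, which doubles
the index, followed by a swap. For `t ≥ 2` the coefficient of `z^j`, `j ≥ 1`, after such a step
only involves coefficients of degree `≤ j / t < j` before it, while the constant terms settle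
after one block; so after `m + 1` blocks the coefficients of degree `≤ m` no longer change. The
same step preserves "coefficients are nonnegative and those of `p` and `q` sum to at most `1`",
which gives the `0`/`1` coefficients.
-/

lemma sternPoly_zero (t : ℕ) : sternPoly t 0 = 0 := by
  rw [sternPoly]

lemma sternPoly_one (t : ℕ) : sternPoly t 1 = 1 := by
  rw [sternPoly]

lemma sternPoly_two_mul (t M : ℕ) : sternPoly t (2 * M) = X * expand ℤ t (sternPoly t M) := by
  rcases M with _ | m
  · simp [sternPoly_zero]
  · rw [show 2 * (m + 1) = 2 * m + 2 by ring, sternPoly, dif_pos (by omega),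
      show (2 * m + 2) / 2 = m + 1 by omega, expand_eq_comp_X_pow]

lemma sternPoly_two_mul_add_one (t M : ℕ) :
    sternPoly t (2 * M + 1) = expand ℤ t (sternPoly t M + sternPoly t (M + 1)) := by
  rcases M with _ | m
  · simp [sternPoly_zero, sternPoly_one]
  · rw [show 2 * (m + 1) + 1 = 2 * m + 1 + 2 by ring, sternPoly, dif_neg (by omega),
      show (2 * m + 1 + 2) / 2 = m + 1 by omega, map_add, add_comm, expand_eq_comp_X_pow,
      expand_eq_comp_X_pow]

lemma sternAlpha_mul (k n : ℕ) :
    (sternAlpha k n : ℤ) * (2 ^ k + 1) = 2 ^ (k * n) - (-1) ^ n := by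
  have hdvd : (2 ^ k + 1 : ℤ) ∣ 2 ^ (k * n) - (-1) ^ n := by
    simpa [pow_mul] using sub_dvd_pow_sub_pow (2 ^ k : ℤ) (-1) n
  have hnonneg : (0 : ℤ) ≤ 2 ^ (k * n) - (-1) ^ n := by
    have : (1 : ℤ) ≤ 2 ^ (k * n) := one_le_pow₀ (by norm_num)
    rcases n.even_or_odd with h | h <;> simp only [h.neg_one_pow] <;> linarith
  rw [sternAlpha, Int.toNat_of_nonneg (Int.ediv_nonneg hnonneg (by positivity)),
    Int.ediv_mul_cancel hdvd]

lemma sternAlpha_succ (k n : ℕ) :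
    (sternAlpha k (n + 1) : ℤ) = 2 ^ k * sternAlpha k n + (-1) ^ n := by
  refine mul_right_cancel₀ (b := (2 ^ k + 1 : ℤ)) (by positivity) ?_
  rw [sternAlpha_mul, add_mul, mul_assoc, sternAlpha_mul, mul_add, pow_add, pow_succ]
  ring

lemma sternAlpha_succ_of_even {k n : ℕ} (hn : Even n) :
    sternAlpha k (n + 1) = 2 ^ k * sternAlpha k n + 1 := by
  have := sternAlpha_succ k n
  rw [hn.neg_one_pow] at this
  exact_mod_cast this

lemma sternAlpha_succ_of_odd {k n : ℕ} (hn : Odd n) :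
    sternAlpha k (n + 1) + 1 = 2 ^ k * sternAlpha k n := by
  have := sternAlpha_succ k n
  rw [hn.neg_one_pow] at this
  zify
  linarith

noncomputable def sternStep {R : Type*} [CommSemiring R] (t : ℕ) (x : R[X] × R[X]) :
    R[X] × R[X] :=
  (X * expand R t x.1, expand R t (x.1 + x.2))

section sternStep

variable {R : Type*} [CommSemiring R] {t : ℕ}

lemma coeff_fst_sternStep_zero (x : R[X] × R[X]) : (sternStep t x).1.coeff 0 = 0 :=
  coeff_X_mul_zero _

lemma coeff_fst_sternStep_succ (ht : 0 < t) (x : R[X] × R[X]) (i : ℕ) :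
    (sternStep t x).1.coeff (i + 1) = if t ∣ i then x.1.coeff (i / t) else 0 := by
  rw [sternStep, coeff_X_mul, coeff_expand ht]

lemma coeff_snd_sternStep (ht : 0 < t) (x : R[X] × R[X]) (j : ℕ) :
    (sternStep t x).2.coeff j = if t ∣ j then x.1.coeff (j / t) + x.2.coeff (j / t) else 0 := by
  rw [sternStep, coeff_expand ht, coeff_add]

end sternStep

lemma sternStep_sternPoly (t M : ℕ) :
    sternStep t (sternPoly t M, sternPoly t (M + 1)) =
      (sternPoly t (2 * M), sternPoly t (2 * M + 1)) := by
  rw [sternStep, sternPoly_two_mul, sternPoly_two_mul_add_one]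

lemma sternStep_sternPoly_swap (t M : ℕ) :
    sternStep t (sternPoly t (M + 1), sternPoly t M) =
      (sternPoly t (2 * M + 2), sternPoly t (2 * M + 1)) := by
  rw [sternStep, show 2 * M + 2 = 2 * (M + 1) by ring, sternPoly_two_mul,
    sternPoly_two_mul_add_one, add_comm (sternPoly t (M + 1))]

lemma iterate_sternStep_sternPoly (t j M : ℕ) :
    (sternStep t)^[j] (sternPoly t M, sternPoly t (M + 1)) =
      (sternPoly t (2 ^ j * M), sternPoly t (2 ^ j * M + 1)) := by
  induction j with
  | zero => simp
  | succ j ih => rw [Function.iterate_succ_apply', ih, sternStep_sternPoly, pow_succ', mul_assoc]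

lemma iterate_sternStep_sternPoly_swap (t j M : ℕ) :
    (sternStep t)^[j] (sternPoly t (M + 1), sternPoly t M) =
      (sternPoly t (2 ^ j * (M + 1)), sternPoly t (2 ^ j * (M + 1) - 1)) := by
  induction j with
  | zero => simp
  | succ j ih =>
    obtain ⟨N, hN⟩ : ∃ N, 2 ^ j * (M + 1) = N + 1 :=
      Nat.exists_eq_succ_of_ne_zero (by positivity)
    rw [Function.iterate_succ_apply', ih, hN, Nat.add_sub_cancel, sternStep_sternPoly_swap,
      pow_succ', mul_assoc, hN, mul_add, mul_one]
    rfl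

def DisjointZeroOneCoeffs (x : ℤ[X] × ℤ[X]) : Prop :=
  ∀ i, 0 ≤ x.1.coeff i ∧ 0 ≤ x.2.coeff i ∧ x.1.coeff i + x.2.coeff i ≤ 1

namespace DisjointZeroOneCoeffs

variable {x : ℤ[X] × ℤ[X]}

lemma swap (hx : DisjointZeroOneCoeffs x) : DisjointZeroOneCoeffs x.swap := fun i => by
  have := hx i
  simp only [Prod.fst_swap, Prod.snd_swap]
  omega

lemma sternStep {t : ℕ} (ht : 2 ≤ t) (hx : DisjointZeroOneCoeffs x) :
    DisjointZeroOneCoeffs (sternStep t x) := by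
  have ht0 : 0 < t := by omega
  rintro (_ | i)
  · have := hx 0
    simp only [coeff_fst_sternStep_zero, coeff_snd_sternStep ht0, dvd_zero, if_true, Nat.zero_div]
    omega
  · rw [coeff_fst_sternStep_succ ht0, coeff_snd_sternStep ht0]
    by_cases h : t ∣ i
    · have h' : ¬t ∣ i + 1 := fun h' => by
        have := Nat.le_of_dvd one_pos ((Nat.dvd_add_right h).mp h')
        omega
      have := hx (i / t)
      simp only [if_pos h, if_neg h']
      omega
    · have := hx ((i + 1) / t)
      simp only [if_neg h]
      split_ifs <;> omega

end DisjointZeroOneCoeffs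

lemma disjointZeroOneCoeffs_sternPoly {t : ℕ} (ht : 2 ≤ t) (M : ℕ) :
    DisjointZeroOneCoeffs (sternPoly t M, sternPoly t (M + 1)) := by
  induction M using Nat.evenOddRec with
  | h0 =>
    intro i
    simp only [zero_add, sternPoly_zero, sternPoly_one, coeff_zero, coeff_one]
    split_ifs <;> norm_num
  | h_even n ih => rw [← sternStep_sternPoly]; exact ih.sternStep ht
  | h_odd n ih =>
    have h := ih.swap
    rw [Prod.swap_prod_mk] at h
    have h' := (h.sternStep ht).swap
    rwa [sternStep_sternPoly_swap, Prod.swap_prod_mk] at h'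

lemma sternPoly_coeff_eq_zero_or_one {t : ℕ} (ht : 2 ≤ t) (M i : ℕ) :
    (sternPoly t M).coeff i = 0 ∨ (sternPoly t M).coeff i = 1 := by
  have := disjointZeroOneCoeffs_sternPoly ht M i
  dsimp only at this
  omega

def CoeffsAgreeBelow {R : Type*} [Semiring R] (m : ℕ) (x y : R[X] × R[X]) : Prop :=
  ∀ i < m, x.1.coeff i = y.1.coeff i ∧ x.2.coeff i = y.2.coeff i

noncomputable def sternBlock {R : Type*} [CommSemiring R] (t k : ℕ) :
    R[X] × R[X] → R[X] × R[X] :=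
  Prod.swap ∘ (sternStep t)^[k]

section sternBlock

variable {R : Type*} [CommSemiring R] {t k : ℕ}

namespace CoeffsAgreeBelow

variable {m n : ℕ} {x y : R[X] × R[X]}

lemma mono (h : CoeffsAgreeBelow n x y) (hmn : m ≤ n) : CoeffsAgreeBelow m x y :=
  fun i hi => h i (hi.trans_le hmn)

lemma swap (h : CoeffsAgreeBelow m x y) : CoeffsAgreeBelow m x.swap y.swap :=
  fun i hi => (h i hi).symm

lemma sternStep (ht : 2 ≤ t) (h : CoeffsAgreeBelow (m + 1) x y) :
    CoeffsAgreeBelow (m + 2) (sternStep t x) (sternStep t y) := by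
  have ht0 : 0 < t := by omega
  intro j hj
  have hdiv : j / t < m + 1 := by
    rcases j with _ | j
    · simp
    · have : (j + 1) / t < j + 1 := Nat.div_lt_self j.succ_pos ht
      omega
  refine ⟨?_, ?_⟩
  · rcases j with _ | i
    · simp only [coeff_fst_sternStep_zero]
    · have := Nat.div_le_self i t
      rw [coeff_fst_sternStep_succ ht0, coeff_fst_sternStep_succ ht0, (h (i / t) (by omega)).1]
  · rw [coeff_snd_sternStep ht0, coeff_snd_sternStep ht0, (h _ hdiv).1, (h _ hdiv).2]

lemma iterate_sternStep (ht : 2 ≤ t) (hk : 1 ≤ k) (h : CoeffsAgreeBelow (m + 1) x y) :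
    CoeffsAgreeBelow (m + 2) ((_root_.sternStep t)^[k] x) ((_root_.sternStep t)^[k] y) := by
  induction k, hk using Nat.le_induction with
  | base => exact h.sternStep ht
  | succ k _ ih =>
    rw [Function.iterate_succ_apply', Function.iterate_succ_apply']
    exact (ih.mono m.succ.le_succ).sternStep ht

lemma sternBlock (ht : 2 ≤ t) (hk : 1 ≤ k) (h : CoeffsAgreeBelow (m + 1) x y) :
    CoeffsAgreeBelow (m + 2) (sternBlock t k x) (sternBlock t k y) :=
  (h.iterate_sternStep ht hk).swap

end CoeffsAgreeBelow

lemma coeff_zero_iterate_sternStep (ht : 0 < t) (hk : 1 ≤ k) (x : R[X] × R[X]) :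
    ((sternStep t)^[k] x).1.coeff 0 = 0 ∧
      ((sternStep t)^[k] x).2.coeff 0 = x.1.coeff 0 + x.2.coeff 0 := by
  induction k, hk using Nat.le_induction with
  | base => simp [coeff_fst_sternStep_zero, coeff_snd_sternStep ht]
  | succ k _ ih =>
    rw [Function.iterate_succ_apply', coeff_fst_sternStep_zero, coeff_snd_sternStep ht,
      if_pos (dvd_zero t), Nat.zero_div, ih.1, ih.2, zero_add]
    exact ⟨rfl, rfl⟩

lemma coeffsAgreeBelow_one_sternBlock (ht : 0 < t) (hk : 1 ≤ k) (x : R[X] × R[X]) :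
    CoeffsAgreeBelow 1 (sternBlock t k x) (sternBlock t k (sternBlock t k x)) := by
  intro i hi
  obtain rfl : i = 0 := by omega
  have hx := coeff_zero_iterate_sternStep ht hk x
  have hBx := coeff_zero_iterate_sternStep ht hk (sternBlock t k x)
  simp only [sternBlock, Function.comp_apply, Prod.fst_swap, Prod.snd_swap] at hBx ⊢
  rw [hBx.1, hBx.2, hx.1, hx.2, add_zero]
  exact ⟨rfl, rfl⟩

lemma coeffsAgreeBelow_iterate_sternBlock_succ (ht : 2 ≤ t) (hk : 1 ≤ k) (x : R[X] × R[X])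
    {m n : ℕ} (hmn : m < n) :
    CoeffsAgreeBelow (m + 1) ((sternBlock t k)^[n] x) ((sternBlock t k)^[n + 1] x) := by
  induction m generalizing n with
  | zero =>
    obtain ⟨n, rfl⟩ : ∃ n', n = n' + 1 := ⟨n - 1, by omega⟩
    rw [Function.iterate_succ_apply' _ (n + 1), Function.iterate_succ_apply' _ n]
    exact coeffsAgreeBelow_one_sternBlock (by omega) hk _
  | succ m ih =>
    obtain ⟨n, rfl⟩ : ∃ n', n = n' + 1 := ⟨n - 1, by omega⟩
    rw [Function.iterate_succ_apply' _ n, Function.iterate_succ_apply' _ (n + 1)]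
    exact (ih (by omega)).sternBlock ht hk

lemma coeff_fst_iterate_sternBlock_eq (ht : 2 ≤ t) (hk : 1 ≤ k) (x : R[X] × R[X])
    {m n : ℕ} (hmn : m < n) :
    ((sternBlock t k)^[n] x).1.coeff m = ((sternBlock t k)^[m + 1] x).1.coeff m := by
  induction n, hmn using Nat.le_induction with
  | base => rfl
  | succ n hmn ih =>
    rw [← ih]
    exact ((coeffsAgreeBelow_iterate_sternBlock_succ ht hk x hmn) m m.lt_succ_self).1.symm

end sternBlock

lemma iterate_sternBlock_zero_one (t k n : ℕ) :
    (sternBlock t k)^[n] ((0 : ℤ[X]), 1) =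
      if Even n then (sternPoly t (sternAlpha k n), sternPoly t (sternAlpha k n + 1))
      else (sternPoly t (sternAlpha k n), sternPoly t (sternAlpha k n - 1)) := by
  induction n with
  | zero => simp [sternAlpha, sternPoly_zero, sternPoly_one]
  | succ n ih =>
    rw [Function.iterate_succ_apply', ih, sternBlock, Function.comp_apply]
    rcases n.even_or_odd with hn | hn
    · rw [if_pos hn, if_neg (Nat.not_even_iff_odd.mpr hn.add_one), sternAlpha_succ_of_even hn,
        iterate_sternStep_sternPoly, Prod.swap_prod_mk, Nat.add_sub_cancel]
    · have hα := sternAlpha_succ_of_odd (k := k) hn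
      obtain ⟨M, hM⟩ : ∃ M, sternAlpha k n = M + 1 :=
        Nat.exists_eq_succ_of_ne_zero fun h => by rw [h] at hα; omega
      rw [hM] at hα
      rw [if_neg (Nat.not_even_iff_odd.mpr hn), if_pos hn.add_one, hM, Nat.add_sub_cancel,
        iterate_sternStep_sternPoly_swap, Prod.swap_prod_mk, ← hα, Nat.add_sub_cancel]

lemma fst_iterate_sternBlock_zero_one (t k n : ℕ) :
    ((sternBlock t k)^[n] ((0 : ℤ[X]), 1)).1 = sternPoly t (sternAlpha k n) := by
  rw [iterate_sternBlock_zero_one]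
  split_ifs <;> rfl

/-- For every `m`, the coefficient of `z^m` in `a_t(α_n; z)` is eventually constant as
`n → ∞`; consequently there is a formal power series `H_k(z) ∈ ℤ[[z]]`, all of whose
coefficients are `0` or `1`, such that for every `m` the coefficient of `z^m` in
`a_t(α_n; z)` equals the `m`-th coefficient of `H_k` for all sufficiently large `n`. -/
theorem sternPoly_alpha_coeff_eventually_constant (t k : ℕ) (ht : 2 ≤ t) (hk : 1 ≤ k) :
    (∀ m : ℕ, ∃ N : ℕ, ∀ n₁ n₂ : ℕ, N ≤ n₁ → N ≤ n₂ →
        (sternPoly t (sternAlpha k n₁)).coeff m = (sternPoly t (sternAlpha k n₂)).coeff m) ∧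
      ∃ H : PowerSeries ℤ,
        (∀ m : ℕ, PowerSeries.coeff (R := ℤ) m H = 0 ∨ PowerSeries.coeff (R := ℤ) m H = 1) ∧
          ∀ m : ℕ, ∃ N : ℕ, ∀ n : ℕ, N ≤ n →
            (sternPoly t (sternAlpha k n)).coeff m = PowerSeries.coeff (R := ℤ) m H := by
  have hstable : ∀ m n, m < n →
      (sternPoly t (sternAlpha k n)).coeff m = (sternPoly t (sternAlpha k (m + 1))).coeff m :=
    fun m n hmn => by
      simpa only [fst_iterate_sternBlock_zero_one] using
        coeff_fst_iterate_sternBlock_eq ht hk ((0 : ℤ[X]), 1) hmn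
  refine ⟨fun m => ⟨m + 1, fun n₁ n₂ h₁ h₂ =>
      (hstable m n₁ h₁).trans (hstable m n₂ h₂).symm⟩,
    PowerSeries.mk fun m => (sternPoly t (sternAlpha k (m + 1))).coeff m,
    fun m => by simpa using sternPoly_coeff_eq_zero_or_one ht _ m,
    fun m => ⟨m + 1, fun n hn => by simpa using hstable m n hn⟩⟩
end

section
/- Let t ≥ 2 and k ≥ 1 be integers, and for n ≥ 1 set d_n = t^{nk}(t^k−1)/(t−1) and D_n = d_n − d_{n−1} + d_{n−2} − ⋯ + (−1)^{n−1} d_1. Then for every n ≥ 1: (a) a_t(2^k; x) evaluated at x = 2^{−t^{nk}} equals 2^{−d_n}; and (b) 2^{D_n} · a_t(2^k−1; 2^{−t^{nk}}) is a positive integer; in particular D_n − t^{nk}·deg a_t(2^k−1; z) ≥ 0. -/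
open Polynomial

/-- `d_n = t^{nk}(t^k - 1)/(t - 1) = t^{nk}(1 + t + ⋯ + t^{k-1})`. -/
def sternd (t k n : ℕ) : ℕ := t ^ (n * k) * ∑ i ∈ Finset.range k, t ^ i

/-- `D_n = d_n - d_{n-1} + d_{n-2} - ⋯ + (-1)^{n-1} d_1 = ∑_{j=1}^n (-1)^{n-j} d_j`. -/
def sternD (t k n : ℕ) : ℤ := ∑ j ∈ Finset.Icc 1 n, (-1 : ℤ) ^ (n - j) * sternd t k j

lemma sternPoly_two_mul_s9 (t n : ℕ) (hn : 1 ≤ n) :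
    sternPoly t (2 * n) = X * (sternPoly t n).comp (X ^ t) := by
  obtain ⟨m, rfl⟩ : ∃ m, n = m + 1 := ⟨n - 1, by omega⟩
  have h : 2 * (m + 1) = 2 * m + 2 := by ring
  rw [h, sternPoly]
  simp [Nat.mul_mod_right, Nat.mul_add_div]

lemma sternPoly_two_mul_add_one_s9 (t n : ℕ) (hn : 1 ≤ n) :
    sternPoly t (2 * n + 1) =
      (sternPoly t (n + 1)).comp (X ^ t) + (sternPoly t n).comp (X ^ t) := by
  obtain ⟨m, rfl⟩ : ∃ m, n = m + 1 := ⟨n - 1, by omega⟩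
  have h : 2 * (m + 1) + 1 = (2 * m + 1) + 2 := by ring
  rw [h, sternPoly]
  have h1 : ((2 * m + 1) + 2) % 2 = 1 := by omega
  simp only [h1]
  have h2 : (2 * m + 1) / 2 = m := by omega
  simp [h2]

lemma sum_geom_succ (t k : ℕ) :
    ∑ i ∈ Finset.range (k+1), t ^ i = t * (∑ i ∈ Finset.range k, t ^ i) + 1 := by
  rw [Finset.sum_range_succ', Finset.mul_sum]
  simp [pow_succ']

lemma sternPoly_two_pow (t k : ℕ) :
    sternPoly t (2 ^ k) = X ^ (∑ i ∈ Finset.range k, t ^ i) := by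
  induction k with
  | zero => simp [sternPoly]
  | succ k ih =>
    rw [pow_succ, mul_comm, sternPoly_two_mul_s9 t _ Nat.one_le_two_pow, ih,
      pow_comp, X_comp, ← pow_mul, sum_geom_succ, pow_succ]
    ring

lemma sternPoly_pred_succ (t k : ℕ) (hk : 1 ≤ k) :
    sternPoly t (2 ^ (k+1) - 1) =
      X ^ (t * ∑ i ∈ Finset.range k, t ^ i) + (sternPoly t (2 ^ k - 1)).comp (X ^ t) := by
  have h : 2 ^ (k+1) - 1 = 2 * (2 ^ k - 1) + 1 := by
    have := Nat.one_le_two_pow (n := k); omega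
  have h2 : 2 ^ k - 1 + 1 = 2 ^ k := by have := Nat.one_le_two_pow (n := k); omega
  have h3 : 2 ≤ 2 ^ k := by
    calc 2 = 2 ^ 1 := rfl
    _ ≤ 2 ^ k := Nat.pow_le_pow_right (by norm_num) hk
  rw [h, sternPoly_two_mul_add_one_s9 t _ (by omega),
    h2, sternPoly_two_pow, pow_comp, X_comp, ← pow_mul]

/-- closed form -/
lemma sternPoly_pred_eq (t k : ℕ) (hk : 1 ≤ k) :
    sternPoly t (2 ^ k - 1) =
      ∑ j ∈ Finset.range k, X ^ (t ^ (k - j) * ∑ i ∈ Finset.range j, t ^ i) := by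
  induction k with
  | zero => omega
  | succ k ih =>
    rcases Nat.eq_or_lt_of_le hk with h1 | h1
    · simp [← h1, sternPoly]
    have hk1 : 1 ≤ k := by omega
    rw [sternPoly_pred_succ t k hk1, ih hk1, Finset.sum_range_succ, add_comm]
    congr 1
    · rw [Polynomial.sum_comp]
      apply Finset.sum_congr rfl
      intro j hj
      rw [pow_comp, X_comp, ← pow_mul]
      congr 1
      have hj' : j < k := Finset.mem_range.mp hj
      have hkj : k + 1 - j = (k - j) + 1 := by omega
      rw [hkj, pow_succ]
      ring
    · congr 1
      have hkk : k + 1 - k = 1 := by omega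
      rw [hkk, pow_one]


lemma geom_le' (t k : ℕ) (ht : 2 ≤ t) : (∑ i ∈ Finset.range k, t ^ i) + 1 ≤ t ^ k := by
  induction k with
  | zero => simp
  | succ k ih =>
    rw [Finset.sum_range_succ, pow_succ]
    have h2 : 2 * t ^ k ≤ t ^ k * t := by
      rw [mul_comm (t ^ k) t]; exact Nat.mul_le_mul_right _ ht
    omega

lemma sternD_zero (t k : ℕ) : sternD t k 0 = 0 := by simp [sternD]

lemma sternD_succ (t k n : ℕ) :
    sternD t k (n+1) = (sternd t k (n+1) : ℤ) - sternD t k n := by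
  rw [sternD, Finset.sum_Icc_succ_top (by omega : 1 ≤ n+1)]
  simp only [Nat.sub_self, pow_zero, one_mul]
  have h : ∀ j ∈ Finset.Icc 1 n, (-1:ℤ)^(n+1-j) * (sternd t k j : ℤ)
      = -((-1)^(n-j) * (sternd t k j : ℤ)) := by
    intro j hj
    simp only [Finset.mem_Icc] at hj
    have hj' : n+1-j = (n-j)+1 := by omega
    rw [hj', pow_succ]; ring
  rw [Finset.sum_congr rfl h, Finset.sum_neg_distrib, sternD]
  ring

lemma sternd_mono (t k n : ℕ) (ht : 2 ≤ t) : sternd t k n ≤ sternd t k (n+1) := by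
  apply Nat.mul_le_mul_right
  exact Nat.pow_le_pow_right (by omega) (by nlinarith)

lemma sternD_bounds (t k : ℕ) (ht : 2 ≤ t) (n : ℕ) :
    0 ≤ sternD t k n ∧ sternD t k n ≤ (sternd t k n : ℤ) := by
  induction n with
  | zero => simp [sternD_zero]
  | succ n ih =>
    obtain ⟨h0, h1⟩ := ih
    rw [sternD_succ]
    have hm := sternd_mono t k n ht
    constructor
    · have : (sternd t k n : ℤ) ≤ (sternd t k (n+1) : ℤ) := by exact_mod_cast hm
      linarith
    · linarith

lemma sternd_le_pow (t k n : ℕ) (ht : 2 ≤ t) : sternd t k n ≤ t ^ ((n+1) * k) := by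
  have h := geom_le' t k ht
  calc sternd t k n ≤ t ^ (n*k) * t ^ k := by
        apply Nat.mul_le_mul_left; omega
    _ = t ^ ((n+1) * k) := by rw [← pow_add]; ring_nf

lemma sternD_key (t k n : ℕ) (ht : 2 ≤ t) (hk : 1 ≤ k) (hn : 1 ≤ n) :
    ((t ^ (n * k) * (t * ∑ i ∈ Finset.range (k-1), t ^ i) : ℕ) : ℤ) ≤ sternD t k n := by
  obtain ⟨m, rfl⟩ : ∃ m, n = m + 1 := ⟨n - 1, by omega⟩
  rw [sternD_succ]
  have hDm : sternD t k m ≤ ((t ^ ((m+1) * k) : ℕ) : ℤ) := by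
    rcases Nat.eq_zero_or_pos m with rfl | hm
    · rw [sternD_zero]; positivity
    · calc sternD t k m ≤ (sternd t k m : ℤ) := (sternD_bounds t k ht m).2
        _ ≤ _ := by exact_mod_cast sternd_le_pow t k m ht
  have hS : t * (∑ i ∈ Finset.range (k-1), t ^ i) + 1 = ∑ i ∈ Finset.range k, t ^ i := by
    have := sum_geom_succ t (k-1)
    have hk1 : k - 1 + 1 = k := by omega
    rw [hk1] at this
    omega
  have hd : (sternd t k (m+1) : ℤ)
      = ((t ^ ((m+1) * k) * (t * ∑ i ∈ Finset.range (k-1), t ^ i) : ℕ) : ℤ)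
        + ((t ^ ((m+1) * k) : ℕ) : ℤ) := by
    rw [sternd, ← hS]
    push_cast
    ring
  rw [hd]
  linarith

lemma exp_le (t k j : ℕ) (hj : j < k) :
    t ^ (k - j) * ∑ i ∈ Finset.range j, t ^ i ≤ t * ∑ i ∈ Finset.range (k-1), t ^ i := by
  have h1 : t ^ (k - j) * ∑ i ∈ Finset.range j, t ^ i = ∑ i ∈ Finset.Ico (k-j) k, t ^ i := by
    rw [Finset.sum_Ico_eq_sum_range, Finset.mul_sum]
    have hkj : k - (k - j) = j := by omega
    rw [hkj]
    exact Finset.sum_congr rfl (fun i _ => by rw [← pow_add])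
  have h2 : t * ∑ i ∈ Finset.range (k-1), t ^ i = ∑ i ∈ Finset.Ico 1 k, t ^ i := by
    rw [Finset.sum_Ico_eq_sum_range, Finset.mul_sum]
    exact Finset.sum_congr rfl (fun i _ => by rw [pow_add, pow_one])
  rw [h1, h2]
  apply Finset.sum_le_sum_of_subset
  intro i hi
  simp only [Finset.mem_Ico] at *
  omega
lemma natDegree_sternPoly_pred_le (t k : ℕ) (hk : 1 ≤ k) :
    (sternPoly t (2 ^ k - 1)).natDegree ≤ t * ∑ i ∈ Finset.range (k-1), t ^ i := by
  rw [sternPoly_pred_eq t k hk]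
  apply Polynomial.natDegree_sum_le_of_forall_le
  intro j hj
  rw [natDegree_X_pow]
  exact exp_le t k j (Finset.mem_range.mp hj)

/-- For every `n ≥ 1`: (a) `a_t(2^k; x)` at `x = 2^{-t^{nk}}` equals `2^{-d_n}`;
(b) `2^{D_n} · a_t(2^k - 1; 2^{-t^{nk}})` is a positive integer; in particular
`D_n - t^{nk}·deg a_t(2^k - 1; z) ≥ 0`. -/
theorem sternPoly_value_at_inverse_power_of_two (t k : ℕ) (ht : 2 ≤ t) (hk : 1 ≤ k)
    (n : ℕ) (hn : 1 ≤ n) :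
    Polynomial.aeval ((2 : ℝ) ^ (-(t ^ (n * k) : ℤ))) (sternPoly t (2 ^ k)) =
        (2 : ℝ) ^ (-(sternd t k n : ℤ)) ∧
      (∃ m : ℕ, 0 < m ∧
        (2 : ℝ) ^ sternD t k n *
          Polynomial.aeval ((2 : ℝ) ^ (-(t ^ (n * k) : ℤ))) (sternPoly t (2 ^ k - 1)) = m) ∧
      0 ≤ sternD t k n - (t : ℤ) ^ (n * k) * ((sternPoly t (2 ^ k - 1)).natDegree : ℤ) := by
  set T : ℕ := t ^ (n * k) with hT
  have hcast : -((t:ℤ) ^ (n * k)) = -(T:ℤ) := by push_cast [hT]; ring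
  rw [hcast]
  have hkey : ((t ^ (n * k) * (t * ∑ i ∈ Finset.range (k-1), t ^ i) : ℕ) : ℤ) ≤ sternD t k n :=
    sternD_key t k n ht hk hn
  refine ⟨?_, ?_, ?_⟩
  · -- part (a)
    rw [sternPoly_two_pow, map_pow, aeval_X, ← zpow_natCast ((2:ℝ) ^ (-(T : ℤ))), ← zpow_mul]
    congr 1
    rw [sternd]
    simp only [hT]
    push_cast
    ring
  · -- part (b1)
    set e : ℕ → ℕ := fun j => t ^ (k - j) * ∑ i ∈ Finset.range j, t ^ i with he
    have hexp : ∀ j < k, ((T : ℤ) * e j) ≤ sternD t k n := by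
      intro j hj
      refine le_trans ?_ hkey
      have := exp_le t k j hj
      push_cast
      have hTpos : (0:ℤ) ≤ (T:ℤ) := by positivity
      calc (T:ℤ) * e j ≤ (T:ℤ) * (t * ∑ i ∈ Finset.range (k-1), (t:ℤ) ^ i) := by
            apply mul_le_mul_of_nonneg_left _ hTpos
            exact_mod_cast this
        _ = _ := by push_cast [hT]; ring
    refine ⟨∑ j ∈ Finset.range k, 2 ^ (sternD t k n - (T : ℤ) * e j).toNat, ?_, ?_⟩
    · apply Finset.sum_pos
      · intro j _; positivity
      · exact ⟨0, Finset.mem_range.mpr (by omega)⟩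
    · rw [sternPoly_pred_eq t k hk, map_sum]
      push_cast
      rw [Finset.mul_sum]
      apply Finset.sum_congr rfl
      intro j hj
      have hj' : j < k := Finset.mem_range.mp hj
      rw [map_pow, aeval_X, ← zpow_natCast ((2:ℝ) ^ (-(T : ℤ))), ← zpow_mul,
        ← zpow_add₀ (by norm_num : (2:ℝ) ≠ 0), ← zpow_natCast (2:ℝ) ((sternD t k n - (T : ℤ) * e j).toNat),
        Int.toNat_of_nonneg (by linarith [hexp j hj'])]
      congr 1
      ring
  · -- part (b2)
    have hdeg := natDegree_sternPoly_pred_le t k hk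
    have h1 : (T : ℤ) * ((sternPoly t (2 ^ k - 1)).natDegree : ℤ)
        ≤ ((t ^ (n * k) * (t * ∑ i ∈ Finset.range (k-1), t ^ i) : ℕ) : ℤ) := by
      push_cast [hT]
      apply mul_le_mul_of_nonneg_left _ (by positivity)
      exact_mod_cast hdeg
    have : ((t:ℤ)) ^ (n*k) = (T : ℤ) := by push_cast [hT]; ring
    rw [this]
    linarith
end
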